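/- arXiv:1811.03526 — 2 statements merged into one kernel-verified Lean document; each statement's English description precedes it below -/
import Mathlib

section
/- For every r ∈ (r₊, ∞), the derivative of r ↦ r²/Υ(r) equals (2/(r·Υ(r)²))·(r² − 3Mr + 2Q²). Consequently r²/Υ(r) is strictly decreasing on (r₊, r_P] and strictly increasing on [r_P, ∞), attaining its strict global minimum over (r₊, ∞) at the photon-sphere radius r = r_P. -/
/-!
Since `r² Υ(r) = r² - 2Mr + Q²` has `r₊` as its larger root, `Υ > 0` above the horizon, and the
quotient rule gives `(r²/Υ)' = 2 (r² - 3Mr + 2Q²) / (r Υ²)`. The quadratic `r² - 3Mr + 2Q²` has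
roots `r_P` and `3M - r_P ≤ M ≤ r₊`, so above the horizon the derivative changes sign exactly once,
from negative to positive, at `r_P`.
-/

noncomputable section

/-- The Reissner–Nordström lapse function `Υ(r) = 1 - 2M/r + Q²/r²`. -/
def Upsilon (M Q r : ℝ) : ℝ := 1 - 2*M/r + Q^2/r^2

/-- The event horizon radius `r₊ = M + √(M² - Q²)`. -/
def rplus (M Q : ℝ) : ℝ := M + Real.sqrt (M^2 - Q^2)

/-- The photon-sphere radius `r_P = (3M + √(9M² - 8Q²))/2`. -/
def rP (M Q : ℝ) : ℝ := (3*M + Real.sqrt (9*M^2 - 8*Q^2)) / 2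

def photonQuadratic (M Q r : ℝ) : ℝ := r^2 - 3*M*r + 2*Q^2

section

variable {M Q r : ℝ}

open Set

lemma Upsilon_eq_div (hr : r ≠ 0) : Upsilon M Q r = (r^2 - 2*M*r + Q^2) / r^2 := by
  unfold Upsilon
  field_simp

lemma le_rplus (M Q : ℝ) : M ≤ rplus M Q :=
  le_add_of_nonneg_right (Real.sqrt_nonneg _)

lemma pos_of_rplus_lt (hM : 0 ≤ M) (hr : rplus M Q < r) : 0 < r :=
  hM.trans_lt ((le_rplus M Q).trans_lt hr)

lemma Upsilon_pos_of_rplus_lt (hM : 0 ≤ M) (hr : rplus M Q < r) : 0 < Upsilon M Q r := by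
  have hr₀ := pos_of_rplus_lt hM hr
  have hsqrt : Real.sqrt (M^2 - Q^2) < r - M := by unfold rplus at hr; linarith
  have hdisc : M^2 - Q^2 < (r - M)^2 :=
    (Real.sqrt_lt' (by linarith [Real.sqrt_nonneg (M^2 - Q^2)])).mp hsqrt
  rw [Upsilon_eq_div hr₀.ne']
  exact div_pos (by linarith) (by positivity)

lemma hasDerivAt_Upsilon (hr : r ≠ 0) :
    HasDerivAt (Upsilon M Q) (2*M/r^2 - 2*Q^2/r^3) r := by
  have h₁ := (hasDerivAt_const r (2*M)).fun_div (hasDerivAt_id' r) hr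
  have h₂ := (hasDerivAt_const r (Q^2)).fun_div (hasDerivAt_pow 2 r) (pow_ne_zero 2 hr)
  refine (((hasDerivAt_const r 1).sub h₁).add h₂).congr_deriv ?_
  field_simp
  ring

lemma hasDerivAt_sq_div_Upsilon (hr : r ≠ 0) (hU : Upsilon M Q r ≠ 0) :
    HasDerivAt (fun s => s^2 / Upsilon M Q s)
      (2 / (r * (Upsilon M Q r)^2) * photonQuadratic M Q r) r := by
  refine ((hasDerivAt_pow 2 r).fun_div (hasDerivAt_Upsilon hr) hU).congr_deriv ?_
  unfold Upsilon at hU ⊢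
  unfold photonQuadratic
  field_simp
  ring

lemma hasDerivAt_sq_div_Upsilon_of_rplus_lt (hM : 0 ≤ M) (hr : rplus M Q < r) :
    HasDerivAt (fun s => s^2 / Upsilon M Q s)
      (2 / (r * (Upsilon M Q r)^2) * photonQuadratic M Q r) r :=
  hasDerivAt_sq_div_Upsilon (pos_of_rplus_lt hM hr).ne' (Upsilon_pos_of_rplus_lt hM hr).ne'

lemma photonQuadratic_rP (h : 8*Q^2 ≤ 9*M^2) : photonQuadratic M Q (rP M Q) = 0 := by
  have ht := Real.sq_sqrt (show 0 ≤ 9*M^2 - 8*Q^2 by linarith)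
  unfold photonQuadratic rP
  linear_combination ht / 4

lemma photonQuadratic_eq_mul (h : 8*Q^2 ≤ 9*M^2) (r : ℝ) :
    photonQuadratic M Q r = (r - rP M Q) * (r - (3*M - rP M Q)) := by
  have hrP := photonQuadratic_rP h
  unfold photonQuadratic at *
  linear_combination hrP

lemma three_mul_sub_rP_le (h : Q^2 ≤ M^2) : 3*M - rP M Q ≤ M := by
  have : |M| ≤ Real.sqrt (9*M^2 - 8*Q^2) := Real.abs_le_sqrt (by linarith)
  unfold rP
  linarith [le_abs_self M]

lemma rplus_lt_rP (hM : 0 < M) (h : Q^2 ≤ M^2) : rplus M Q < rP M Q := by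
  set s := Real.sqrt (M^2 - Q^2)
  set t := Real.sqrt (9*M^2 - 8*Q^2)
  have hs : s^2 = M^2 - Q^2 := Real.sq_sqrt (by linarith [sq_nonneg M])
  have ht : t^2 = 9*M^2 - 8*Q^2 := Real.sq_sqrt (by linarith [sq_nonneg M])
  have ht₀ : 0 ≤ t := Real.sqrt_nonneg _
  have : 2*s < M + t := lt_of_pow_lt_pow_left₀ 2 (by positivity) (by nlinarith)
  show M + s < (3*M + t) / 2
  linarith

lemma photonQuadratic_neg (h : Q^2 ≤ M^2) (h₁ : rplus M Q < r) (h₂ : r < rP M Q) :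
    photonQuadratic M Q r < 0 := by
  rw [photonQuadratic_eq_mul (by linarith [sq_nonneg M])]
  exact mul_neg_of_neg_of_pos (by linarith)
    (by linarith [three_mul_sub_rP_le h, le_rplus M Q])

lemma photonQuadratic_pos (h : 8*Q^2 ≤ 9*M^2) (hr : rP M Q < r) : 0 < photonQuadratic M Q r := by
  have : 3*M ≤ 2 * rP M Q := by unfold rP; linarith [Real.sqrt_nonneg (9*M^2 - 8*Q^2)]
  rw [photonQuadratic_eq_mul h]
  exact mul_pos (by linarith) (by linarith)

lemma strictAntiOn_sq_div_Upsilon (hM : 0 ≤ M) (h : Q^2 ≤ M^2) :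
    StrictAntiOn (fun r => r^2 / Upsilon M Q r) (Ioc (rplus M Q) (rP M Q)) := by
  have hderiv {x} (hx : rplus M Q < x) := hasDerivAt_sq_div_Upsilon_of_rplus_lt hM hx
  refine strictAntiOn_of_hasDerivWithinAt_neg (convex_Ioc _ _)
    (fun x hx => (hderiv hx.1).continuousAt.continuousWithinAt)
    (fun x hx => (hderiv (interior_subset hx).1).hasDerivWithinAt) fun x hx => ?_
  rw [interior_Ioc] at hx
  have := pos_of_rplus_lt hM hx.1
  have := Upsilon_pos_of_rplus_lt hM hx.1
  exact mul_neg_of_pos_of_neg (by positivity) (photonQuadratic_neg h hx.1 hx.2)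

lemma strictMonoOn_sq_div_Upsilon (hM : 0 < M) (h : Q^2 ≤ M^2) :
    StrictMonoOn (fun r => r^2 / Upsilon M Q r) (Ici (rP M Q)) := by
  have hderiv {x} (hx : rP M Q ≤ x) :=
    hasDerivAt_sq_div_Upsilon_of_rplus_lt hM.le ((rplus_lt_rP hM h).trans_le hx)
  refine strictMonoOn_of_hasDerivWithinAt_pos (convex_Ici _)
    (fun x hx => (hderiv hx).continuousAt.continuousWithinAt)
    (fun x hx => (hderiv (interior_subset hx)).hasDerivWithinAt) fun x hx => ?_
  rw [interior_Ici] at hx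
  have hx' := (rplus_lt_rP hM h).trans hx
  have := pos_of_rplus_lt hM.le hx'
  have := Upsilon_pos_of_rplus_lt hM.le hx'
  exact mul_pos (by positivity) (photonQuadratic_pos (by linarith [sq_nonneg M]) hx)

end

theorem rsqOverUpsilon_min_at_photonSphere (M Q : ℝ) (hM : 0 < M) (hQ : |Q| < M) :
    (∀ r ∈ Set.Ioi (rplus M Q),
      HasDerivAt (fun s => s^2 / Upsilon M Q s)
        ((2 / (r * (Upsilon M Q r)^2)) * (r^2 - 3*M*r + 2*Q^2)) r) ∧
    StrictAntiOn (fun r => r^2 / Upsilon M Q r) (Set.Ioc (rplus M Q) (rP M Q)) ∧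
    StrictMonoOn (fun r => r^2 / Upsilon M Q r) (Set.Ici (rP M Q)) ∧
    rplus M Q < rP M Q ∧
    (∀ r ∈ Set.Ioi (rplus M Q), r ≠ rP M Q →
      (rP M Q)^2 / Upsilon M Q (rP M Q) < r^2 / Upsilon M Q r) := by
  have hQM : Q^2 ≤ M^2 := (sq_lt_sq' (abs_lt.mp hQ).1 (abs_lt.mp hQ).2).le
  have hlt := rplus_lt_rP hM hQM
  have hanti := strictAntiOn_sq_div_Upsilon hM.le hQM
  have hmono := strictMonoOn_sq_div_Upsilon hM hQM
  refine ⟨fun r hr => hasDerivAt_sq_div_Upsilon_of_rplus_lt hM.le hr, hanti, hmono, hlt,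
    fun r hr hne => ?_⟩
  rcases hne.lt_or_gt with h | h
  · exact hanti ⟨hr, h.le⟩ ⟨hlt, le_rfl⟩ h
  · exact hmono Set.self_mem_Ici h.le h
end
end

section
/- The constant C_* := w_* · ∫_{r_P}^{r_*} s²/Υ(s) ds satisfies 0 < C_* ≤ 2r_*·(r_* − r_P); consequently r_*² − C_* ≥ r_*·(2r_P − r_*) > 0. -/
/-!
Writing `Υ(s) = (s² - 2Ms + Q²)/s²`, the integrand `s²/Υ(s) = s⁴/(s² - 2Ms + Q²)` has derivative
`2s³(s² - 3Ms + 2Q²)/(s² - 2Ms + Q²)²`, and `r_P` is the larger root of `s² - 3Ms + 2Q²`.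
So the integrand is positive and increasing on `[r_P, r_*]`, and the integral is at most
`(r_* - r_P) · r_*²/Υ(r_*)`; multiplying by `w_* = 2Υ(r_*)/r_*` gives `C_* ≤ 2r_*(r_* - r_P)`.
The remaining inequalities reduce to `r_P < r_* < 2r_P`, which is elementary algebra with square roots.
-/

noncomputable section

/-- The radius `r_* = 2M + √(4M² - 3Q²)`. -/
def rstar (M Q : ℝ) : ℝ := 2*M + Real.sqrt (4*M^2 - 3*Q^2)

/-- The constant `w_* = (2/r_*)·Υ(r_*)`. -/
def wstar (M Q : ℝ) : ℝ := (2 / rstar M Q) * Upsilon M Q (rstar M Q)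

/-- The constant `C_* = w_* · ∫_{r_P}^{r_*} s²/Υ(s) ds`. -/
def Cstar (M Q : ℝ) : ℝ :=
  wstar M Q * ∫ s in (rP M Q)..(rstar M Q), s^2 / Upsilon M Q s

theorem intervalIntegral_le_mul_of_monotoneOn {f : ℝ → ℝ} {a b : ℝ} (hab : a ≤ b)
    (hf : MonotoneOn f (Set.Icc a b)) : ∫ x in a..b, f x ≤ (b - a) * f b := by
  have hfi : IntervalIntegrable f MeasureTheory.volume a b := by
    apply MonotoneOn.intervalIntegrable
    rwa [Set.uIcc_of_le hab]
  calc ∫ x in a..b, f x ≤ ∫ _ in a..b, f b :=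
        intervalIntegral.integral_mono_on hab hfi intervalIntegrable_const
          fun x hx => hf hx (Set.right_mem_Icc.mpr hab) hx.2
    _ = (b - a) * f b := by rw [intervalIntegral.integral_const, smul_eq_mul]

section Radii

variable {M Q : ℝ}

theorem two_mul_lt_rP (hQ : Q^2 < M^2) : 2 * M < rP M Q := by
  have : M < Real.sqrt (9*M^2 - 8*Q^2) := Real.lt_sqrt_of_sq_lt (by linarith)
  rw [rP]
  linarith

theorem rP_lt_rstar (hM : 0 ≤ M) (hQ : Q^2 < M^2) : rP M Q < rstar M Q := by
  have hb : 0 ≤ Real.sqrt (4*M^2 - 3*Q^2) := Real.sqrt_nonneg _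
  have hb2 : Real.sqrt (4*M^2 - 3*Q^2) ^ 2 = 4*M^2 - 3*Q^2 := Real.sq_sqrt (by nlinarith)
  have : Real.sqrt (9*M^2 - 8*Q^2) < M + 2 * Real.sqrt (4*M^2 - 3*Q^2) := by
    rw [Real.sqrt_lt' (by nlinarith)]
    nlinarith
  rw [rP, rstar]
  linarith

theorem rstar_lt_two_mul_rP (hM : 0 ≤ M) (hQ : Q^2 < M^2) : rstar M Q < 2 * rP M Q := by
  have ha : M < Real.sqrt (9*M^2 - 8*Q^2) := Real.lt_sqrt_of_sq_lt (by linarith)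
  have ha2 : Real.sqrt (9*M^2 - 8*Q^2) ^ 2 = 9*M^2 - 8*Q^2 := Real.sq_sqrt (by nlinarith)
  have : Real.sqrt (4*M^2 - 3*Q^2) < M + Real.sqrt (9*M^2 - 8*Q^2) := by
    rw [Real.sqrt_lt' (by linarith)]
    nlinarith
  rw [rP, rstar]
  linarith

theorem quadratic_nonneg_of_rP_le (hQ : 8 * Q^2 ≤ 9 * M^2) {s : ℝ} (hs : rP M Q ≤ s) :
    0 ≤ s^2 - 3*M*s + 2*Q^2 := by
  have ha : 0 ≤ Real.sqrt (9*M^2 - 8*Q^2) := Real.sqrt_nonneg _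
  have ha2 : Real.sqrt (9*M^2 - 8*Q^2) ^ 2 = 9*M^2 - 8*Q^2 := Real.sq_sqrt (by linarith)
  rw [rP] at hs
  -- `s² - 3Ms + 2Q² = (s - r_P)(s - r_P')` with `r_P' = (3M - √(9M² - 8Q²))/2 ≤ r_P`
  nlinarith [mul_nonneg (sub_nonneg.mpr hs)
    (by linarith : 0 ≤ s - (3*M - Real.sqrt (9*M^2 - 8*Q^2))/2)]

end Radii

section Integrand

variable {M Q : ℝ}

theorem Upsilon_pos {s : ℝ} (hs0 : 0 < s) (hs : 2 * M < s) : 0 < Upsilon M Q s := by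
  have h2M : 2*M/s < 1 := (div_lt_one hs0).mpr hs
  have hQ : 0 ≤ Q^2/s^2 := by positivity
  rw [Upsilon]
  linarith

theorem sq_div_Upsilon_le_sq_div_Upsilon (hM : 0 ≤ M) {s t : ℝ} (hs : 2 * M < s)
    (hq : 0 ≤ s^2 - 3*M*s + 2*Q^2) (hst : s ≤ t) :
    s^2 / Upsilon M Q s ≤ t^2 / Upsilon M Q t := by
  have hs0 : 0 < s := by linarith
  have ht0 : 0 < t := by linarith
  have hts : 0 ≤ t - s := by linarith
  -- `t⁴D(s) - s⁴D(t)`, with `D(x) = x² - 2Mx + Q²`, is exactly `f1 + f2 + f3 + f4`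
  have key : s^4 * (t^2 - 2*M*t + Q^2) ≤ t^4 * (s^2 - 2*M*s + Q^2) := by
    have f1 : 0 ≤ (t - s) * (s*t*(s+t)*(s^2 - 3*M*s + 2*Q^2)) := by positivity
    have f2 : 0 ≤ (t - s) * (s^2*t*(t-s)*(2*s-3*M)) :=
      mul_nonneg hts (mul_nonneg (mul_nonneg (by positivity) hts) (by linarith))
    have f3 : 0 ≤ (t - s) * (s*t*(t-s)^2*(s-2*M)) :=
      mul_nonneg hts (mul_nonneg (by positivity) (by linarith))
    have f4 : 0 ≤ (t - s) * ((t-s)^2*Q^2*(t+s)) := by positivity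
    linarith [f1, f2, f3, f4]
  rw [div_le_div_iff₀ (Upsilon_pos hs0 hs) (Upsilon_pos ht0 (by linarith)), Upsilon, Upsilon]
  have e1 : s^2 * (1 - 2*M/t + Q^2/t^2) = s^4 * (t^2 - 2*M*t + Q^2) / (t^2 * s^2) := by
    field_simp
  have e2 : t^2 * (1 - 2*M/s + Q^2/s^2) = t^4 * (s^2 - 2*M*s + Q^2) / (t^2 * s^2) := by
    field_simp
  rw [e1, e2]
  exact div_le_div_of_nonneg_right key (by positivity)

theorem monotoneOn_sq_div_Upsilon (hM : 0 ≤ M) (hQ : Q^2 < M^2) :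
    MonotoneOn (fun s => s^2 / Upsilon M Q s) (Set.Ici (rP M Q)) := fun s hs _ _ hst =>
  sq_div_Upsilon_le_sq_div_Upsilon hM ((two_mul_lt_rP hQ).trans_le hs)
    (quadratic_nonneg_of_rP_le (by linarith [sq_nonneg M]) hs) hst

end Integrand

theorem Cstar_bounds (M Q : ℝ) (hM : 0 < M) (hQ : |Q| < M) :
    0 < Cstar M Q ∧
    Cstar M Q ≤ 2 * rstar M Q * (rstar M Q - rP M Q) ∧
    rstar M Q * (2 * rP M Q - rstar M Q) ≤ (rstar M Q)^2 - Cstar M Q ∧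
    0 < rstar M Q * (2 * rP M Q - rstar M Q) := by
  have hQ2 : Q^2 < M^2 := sq_lt_sq' (abs_lt.mp hQ).1 (abs_lt.mp hQ).2
  have h2M := two_mul_lt_rP hQ2
  have hPr := rP_lt_rstar hM.le hQ2
  have hr2P := rstar_lt_two_mul_rP hM.le hQ2
  set p := rP M Q
  set r := rstar M Q
  have hr0 : 0 < r := by linarith
  have hUr : 0 < Upsilon M Q r := Upsilon_pos hr0 (by linarith)
  have hw : 0 < wstar M Q := by unfold wstar; positivity
  have hmono : MonotoneOn (fun s => s^2 / Upsilon M Q s) (Set.Icc p r) :=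
    (monotoneOn_sq_div_Upsilon hM.le hQ2).mono Set.Icc_subset_Ici_self
  have hI_pos : 0 < ∫ s in p..r, s^2 / Upsilon M Q s := by
    refine intervalIntegral.intervalIntegral_pos_of_pos_on ?_ (fun s ⟨hps, _⟩ => ?_) hPr
    · exact MonotoneOn.intervalIntegrable (by rwa [Set.uIcc_of_le hPr.le])
    · have hs0 : 0 < s := by linarith
      exact div_pos (pow_pos hs0 2) (Upsilon_pos hs0 (by linarith))
  have hC_le : Cstar M Q ≤ 2 * r * (r - p) :=
    calc Cstar M Q ≤ wstar M Q * ((r - p) * (r^2 / Upsilon M Q r)) :=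
          mul_le_mul_of_nonneg_left (intervalIntegral_le_mul_of_monotoneOn hPr.le hmono) hw.le
      _ = 2 * r * (r - p) := by
          show 2 / r * Upsilon M Q r * _ = _
          field_simp
  exact ⟨mul_pos hw hI_pos, hC_le, by linarith, mul_pos hr0 (by linarith)⟩
end
end
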